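/- For every integer ℓ ≥ 0, every integer m with 0 ≤ m ≤ ℓ, and every complex number w, the associated Legendre function satisfies P_ℓ^m(w) = ((ℓ+m)!/(2^ℓ ℓ!)) · Σ_{k=0}^{ℓ-m} C(ℓ,k)·C(ℓ,m+k)·(w-1)^{ℓ-(m/2+k)}·(w+1)^{m/2+k}, where P_ℓ^m(w) := (1/(2^ℓ ℓ!))·(w²-1)^{m/2}·d^{ℓ+m}/dw^{ℓ+m} (w²-1)^ℓ. In particular, when restricting to real z ≥ 1, writing P_ℓ^m(z) = ((ℓ+m)!/(2^ℓ ℓ!)) · Σ_{k=0}^{ℓ-m} C(ℓ,k)·C(ℓ,m+k)·(z-1)^{ℓ-m/2-k}·(z+1)^{m/2+k} shows P_ℓ^m(z) ≥ 0. -/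

import Mathlib

/-!
Write `(w² - 1)^ℓ = (w - 1)^ℓ (w + 1)^ℓ` and apply the Leibniz rule. In the `(ℓ + m)`-th
derivative only the terms that differentiate `(w - 1)^ℓ` exactly `m + k` times, `0 ≤ k ≤ ℓ - m`,
survive, and their coefficients collapse to `(ℓ + m)! C(ℓ, k) C(ℓ, m + k)`. The half-integer
prefactor `(w + 1)^{m/2} (w - 1)^{m/2}` then merges with the integer powers, since
`x^(y + n) = x^y x^n` holds for every `x` once `Re y ≥ 0`. For real `z ≥ 1` each summand is a
product of nonnegative factors.
-/

open Complex Finset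
open scoped Nat

theorem Nat.choose_mul_descFactorial_mul_descFactorial {ℓ k : ℕ} (m : ℕ) (hk : k ≤ ℓ) :
    (ℓ + m).choose (m + k) * ℓ.descFactorial (m + k) * ℓ.descFactorial (ℓ - k) =
      (ℓ + m)! * (ℓ.choose k * ℓ.choose (m + k)) := by
  have hfact := Nat.choose_mul_factorial_mul_factorial (show m + k ≤ ℓ + m by omega)
  rw [show ℓ + m - (m + k) = ℓ - k by omega] at hfact
  rw [Nat.descFactorial_eq_factorial_mul_choose, Nat.descFactorial_eq_factorial_mul_choose,
    Nat.choose_symm hk, ← hfact]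
  ring

section

variable {𝕜 : Type*} [NontriviallyNormedField 𝕜]

theorem iteratedDeriv_sub_const_pow (n p : ℕ) (a x : 𝕜) :
    iteratedDeriv n (fun t => (t - a) ^ p) x = p.descFactorial n * (x - a) ^ (p - n) := by
  rw [iteratedDeriv_comp_sub_const (f := (· ^ p))]
  exact iteratedDeriv_pow p n

theorem iteratedDeriv_sub_pow_mul_sub_pow (ℓ m : ℕ) (a b x : 𝕜) :
    iteratedDeriv (ℓ + m) (fun t => (t - a) ^ ℓ * (t - b) ^ ℓ) x =
      (ℓ + m)! * ∑ k ∈ range (ℓ - m + 1),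
        (ℓ.choose k * ℓ.choose (m + k) : 𝕜) * (x - a) ^ (ℓ - m - k) * (x - b) ^ k := by
  set term : ℕ → 𝕜 := fun i => ((ℓ + m).choose i : 𝕜) * (ℓ.descFactorial i * (x - a) ^ (ℓ - i)) *
    (ℓ.descFactorial (ℓ + m - i) * (x - b) ^ (ℓ - (ℓ + m - i)))
  have leibniz : iteratedDeriv (ℓ + m) (fun t => (t - a) ^ ℓ * (t - b) ^ ℓ) x =
      ∑ i ∈ range (m + (ℓ + 1)), term i := by
    have hf : ContDiffAt 𝕜 (ℓ + m) (fun t => (t - a) ^ ℓ) x := by fun_prop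
    have hg : ContDiffAt 𝕜 (ℓ + m) (fun t => (t - b) ^ ℓ) x := by fun_prop
    rw [show m + (ℓ + 1) = ℓ + m + 1 by omega, ← Pi.mul_def, iteratedDeriv_mul hf hg]
    simp only [term, iteratedDeriv_sub_const_pow]
  have below_m : ∑ i ∈ range m, term i = 0 := sum_eq_zero fun i hi => by
    have : ℓ < ℓ + m - i := by rw [mem_range] at hi; omega
    simp [term, Nat.descFactorial_eq_zero_iff_lt.2 this]
  have above : ∑ k ∈ range (ℓ - m + 1), term (m + k) = ∑ k ∈ range (ℓ + 1), term (m + k) := by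
    refine sum_subset (range_subset_range.2 (by omega)) fun k _ hk => ?_
    have : ℓ < m + k := by rw [mem_range] at hk; omega
    simp [term, Nat.descFactorial_eq_zero_iff_lt.2 this]
  rw [leibniz, sum_range_add, below_m, zero_add, ← above, mul_sum]
  refine sum_congr rfl fun k hk => ?_
  have hkℓ : k ≤ ℓ := by rw [mem_range] at hk; omega
  have coeff := congrArg (Nat.cast (R := 𝕜)) (Nat.choose_mul_descFactorial_mul_descFactorial m hkℓ)
  push_cast at coeff
  simp only [term]
  rw [show ℓ + m - (m + k) = ℓ - k by omega, Nat.sub_sub_self hkℓ, Nat.sub_sub]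
  linear_combination (x - a) ^ (ℓ - (m + k)) * (x - b) ^ k * coeff

end

theorem Complex.cpow_add_natCast_of_re_nonneg {y : ℂ} (hy : 0 ≤ y.re) (x : ℂ) (n : ℕ) :
    x ^ (y + n) = x ^ y * x ^ n := by
  rcases eq_or_ne x 0 with rfl | hx
  · rcases eq_or_ne n 0 with rfl | hn
    · simp
    have hyn : y + n ≠ 0 := fun h => by
      have := congrArg re h
      simp only [add_re, natCast_re, zero_re] at this
      have : (1 : ℝ) ≤ n := by exact_mod_cast Nat.one_le_iff_ne_zero.2 hn
      linarith
    rw [zero_cpow hyn, zero_pow hn, mul_zero]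
  · rw [cpow_add _ _ hx, cpow_natCast]

theorem assoc_legendre_expansion (ℓ m : ℕ) (hm : m ≤ ℓ) :
    (∀ w : ℂ,
      (1 / (2 ^ ℓ * (Nat.factorial ℓ : ℂ))) *
        ((w + 1) ^ ((m : ℂ) / 2) * (w - 1) ^ ((m : ℂ) / 2)) *
        iteratedDeriv (ℓ + m) (fun t : ℂ => (t ^ 2 - 1) ^ ℓ) w =
      ((Nat.factorial (ℓ + m) : ℂ) / (2 ^ ℓ * (Nat.factorial ℓ : ℂ))) *
        ∑ k ∈ range (ℓ - m + 1),
          (Nat.choose ℓ k : ℂ) * (Nat.choose ℓ (m + k) : ℂ) *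
            (w - 1) ^ ((ℓ : ℂ) - ((m : ℂ) / 2 + (k : ℂ))) *
            (w + 1) ^ ((m : ℂ) / 2 + (k : ℂ))) ∧
    (∀ z : ℝ, 1 ≤ z →
      0 ≤ ((Nat.factorial (ℓ + m) : ℝ) / (2 ^ ℓ * (Nat.factorial ℓ : ℝ))) *
        ∑ k ∈ range (ℓ - m + 1),
          (Nat.choose ℓ k : ℝ) * (Nat.choose ℓ (m + k) : ℝ) *
            (z - 1) ^ ((ℓ : ℝ) - (m : ℝ) / 2 - (k : ℝ)) *
            (z + 1) ^ ((m : ℝ) / 2 + (k : ℝ))) := by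
  constructor
  · intro w
    have hm2 : 0 ≤ ((m : ℂ) / 2).re := by simp only [div_ofNat_re, natCast_re]; positivity
    have split_cpow : ∀ k ∈ range (ℓ - m + 1),
        (ℓ.choose k : ℂ) * (ℓ.choose (m + k) : ℂ) *
            (w - 1) ^ ((ℓ : ℂ) - ((m : ℂ) / 2 + (k : ℂ))) * (w + 1) ^ ((m : ℂ) / 2 + (k : ℂ)) =
        (w + 1) ^ ((m : ℂ) / 2) * (w - 1) ^ ((m : ℂ) / 2) *
          ((ℓ.choose k * ℓ.choose (m + k) : ℂ) * (w - 1) ^ (ℓ - m - k) * (w - -1) ^ k) := by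
      intro k hk
      have hexp : (ℓ : ℂ) - ((m : ℂ) / 2 + (k : ℂ)) = (m : ℂ) / 2 + ((ℓ - m - k : ℕ) : ℂ) := by
        rw [mem_range] at hk
        push_cast [Nat.cast_sub (show k ≤ ℓ - m by omega), Nat.cast_sub hm]
        ring
      rw [hexp, cpow_add_natCast_of_re_nonneg hm2, cpow_add_natCast_of_re_nonneg hm2,
        sub_neg_eq_add]
      ring
    have hsq : (fun t : ℂ => (t ^ 2 - 1) ^ ℓ) = fun t => (t - 1) ^ ℓ * (t - -1) ^ ℓ := by
      funext t
      rw [← mul_pow]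
      ring
    rw [sum_congr rfl split_cpow, ← mul_sum, hsq, iteratedDeriv_sub_pow_mul_sub_pow]
    ring
  · intro z hz
    refine mul_nonneg (by positivity) (sum_nonneg fun k _ => ?_)
    have := Real.rpow_nonneg (show 0 ≤ z - 1 by linarith) ((ℓ : ℝ) - m / 2 - k)
    have := Real.rpow_nonneg (show 0 ≤ z + 1 by linarith) ((m : ℝ) / 2 + k)
    positivity
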